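/- Fix a constant c > √2. For each n, define p_k = 1 if k ≤ 16c²·log n, and p_k = 1/2 + c·√((log n)/k) if k > 16c²·log n. Let w be a random binary word of length n in which the letters w₁,…,wₙ are independent and w_k equals 1 with probability p_k. Then the probability that w is prefix normal tends to 1 as n → ∞. -/

import Mathlib

/-- Number of ones of the infinite binary word `w` in the 0-indexed
half-open interval of positions `[a, b)`. Thus `cnt w j (j+k)` is the number
of 1s in the subword `w[j+1, j+k]` (1-indexed), and `cnt w 0 k` is the number
of 1s in the prefix of length `k`. -/
def cnt (w : ℕ → Bool) (a b : ℕ) : ℕ :=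
  ((Finset.Ico a b).filter (fun i => w i = true)).card

/-- Extend a binary word of length `n` to an infinite word by `false`s. -/
def ext {n : ℕ} (w : Fin n → Bool) : ℕ → Bool :=
  fun i => if h : i < n then w ⟨i, h⟩ else false

/-- A binary word of length `n` is prefix normal if the number of 1s in any
subword is at most the number of 1s in the prefix of the same length. -/
def IsPrefixNormal (n : ℕ) (w : ℕ → Bool) : Prop :=
  ∀ k j : ℕ, k ≤ n → j + k ≤ n → cnt w j (j + k) ≤ cnt w 0 k

/-- The probability `p_k` that the `k`-th letter (1-indexed) of the random
word of length `n` equals `1`: equal to `1` if `k ≤ 16 c² log n`, and to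
`1/2 + c √(log n / k)` otherwise. Logarithms are natural. -/
noncomputable def pr (c : ℝ) (n k : ℕ) : ℝ :=
  if (k : ℝ) ≤ 16 * c ^ 2 * Real.log n then 1
  else 1 / 2 + c * Real.sqrt (Real.log n / k)

/-- The probability of picking the word `w : Fin n → Bool` when the letters
are independent with `P(w_k = 1) = p_k` (positions 1-indexed). -/
noncomputable def wordProb (c : ℝ) (n : ℕ) (w : Fin n → Bool) : ℝ :=
  ∏ i : Fin n, (if w i then pr c n (i.1 + 1) else 1 - pr c n (i.1 + 1))

/-!
A word fails to be prefix normal only if some window `w[a+1, a+l]` with `l ≤ a` contains more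
ones than the prefix of length `l`: a window overlapping the prefix can be shortened by
cancelling the common part. If `l ≤ 16 c² log n` the prefix consists of ones almost surely.
Otherwise, since `p_k - 1/2` decays like `c √(log n / k)`, the expected number of ones in the
prefix exceeds that in the window by at least `c √(l log n)`, and Hoeffding's inequality for the
difference of the two independent sums bounds the probability of the event by
`exp (-c² log n) = n ^ (-c²)`.
A union bound over the at most `(n + 1)²` windows leaves a failure probability of order
`n ^ (2 - c²)`, which tends to `0` because `c² > 2`.
-/

open Real MeasureTheory ProbabilityTheory Filter Topology
open scoped unitInterval

section Counting

lemma cnt_eq_sum (w : ℕ → Bool) (a b : ℕ) :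
    cnt w a b = ∑ i ∈ Finset.Ico a b, if w i then 1 else 0 :=
  Finset.card_filter _ _

lemma cnt_add (w : ℕ → Bool) {a b c : ℕ} (hab : a ≤ b) (hbc : b ≤ c) :
    cnt w a b + cnt w b c = cnt w a c := by
  simp only [cnt_eq_sum, Finset.sum_Ico_consecutive _ hab hbc]

lemma cnt_le_sub (w : ℕ → Bool) (a b : ℕ) : cnt w a b ≤ b - a :=
  (Finset.card_filter_le _ _).trans (Nat.card_Ico a b).le

lemma cnt_eq_sub_of_forall {w : ℕ → Bool} {a b : ℕ} (hw : ∀ i ∈ Finset.Ico a b, w i) :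
    cnt w a b = b - a := by
  rw [cnt, Finset.filter_true_of_mem hw, Nat.card_Ico]

lemma isPrefixNormal_of_disjoint_windows {n : ℕ} {w : ℕ → Bool}
    (h : ∀ a l, l ≤ a → a + l ≤ n → cnt w a (a + l) ≤ cnt w 0 l) :
    IsPrefixNormal n w := by
  intro k j hk hjk
  rcases le_or_gt k j with hkj | hjk'
  · exact h j k hkj hjk
  · have := h k j hjk'.le (by omega)
    rw [← cnt_add w hjk'.le (by omega : k ≤ j + k), ← cnt_add w (Nat.zero_le j) hjk'.le,
      Nat.add_comm j k]
    omega

lemma sum_filter_fin_eq_sum_Ico {M : Type*} [AddCommMonoid M] (f : ℕ → M) {n a b : ℕ}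
    (hb : b ≤ n) :
    ∑ i ∈ Finset.univ.filter (fun i : Fin n => a ≤ (i : ℕ) ∧ (i : ℕ) < b), f i
      = ∑ j ∈ Finset.Ico a b, f j :=
  Finset.sum_bij' (fun i _ => i) (fun j hj => ⟨j, by simp at hj; omega⟩)
    (by simp) (by simp) (by simp) (by simp) (by simp)

lemma card_filter_fin_eq {n a b : ℕ} (hb : b ≤ n) :
    (Finset.univ.filter (fun i : Fin n => a ≤ (i : ℕ) ∧ (i : ℕ) < b)).card = b - a := by
  rw [Finset.card_eq_sum_ones, sum_filter_fin_eq_sum_Ico (fun _ => 1) hb]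
  simp

lemma cnt_ext_eq_sum {n : ℕ} (w : Fin n → Bool) {a b : ℕ} (hb : b ≤ n) :
    (cnt (ext w) a b : ℝ)
      = ∑ i ∈ Finset.univ.filter (fun i : Fin n => a ≤ (i : ℕ) ∧ (i : ℕ) < b),
          if w i then 1 else 0 := by
  rw [cnt_eq_sum, Nat.cast_sum,
    ← sum_filter_fin_eq_sum_Ico (fun j => ((if ext w j then 1 else 0 : ℕ) : ℝ)) hb]
  refine Finset.sum_congr rfl fun i _ => ?_
  simp [ext]

end Counting

section BernoulliProduct

variable {ι : Type*} [Fintype ι] (p : ι → I)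

/-- The letters are independent, and letter `i` is `true` with probability `p i`. -/
noncomputable def bernoulliPi : Measure (ι → Bool) :=
  Measure.pi fun i => Ber(true, false, p i)

instance : IsProbabilityMeasure (bernoulliPi p) := by
  unfold bernoulliPi; infer_instance

lemma bernoulliPi_real_singleton (w : ι → Bool) :
    (bernoulliPi p).real {w} = ∏ i, if w i then (p i : ℝ) else 1 - p i := by
  rw [measureReal_def, bernoulliPi, Measure.pi_singleton, ENNReal.toReal_prod]
  refine Finset.prod_congr rfl fun i _ => ?_
  cases w i <;> simp

lemma bernoulliPi_real_eval_false (i : ι) :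
    (bernoulliPi p).real {w | w i = false} = 1 - p i := by
  calc (bernoulliPi p).real {w | w i = false}
      = Ber(true, false, p i).real {false} :=
        (measurePreserving_eval (fun j => Ber(true, false, p j)) i).measureReal_preimage
          (measurableSet_singleton false).nullMeasurableSet
    _ = 1 - p i := by simp

lemma integral_bernoulliPi_indicator (i : ι) :
    ∫ w, (if w i then 1 else 0 : ℝ) ∂bernoulliPi p = p i := by
  rw [bernoulliPi, integral_comp_eval (μ := fun j => Ber(true, false, p j)) (i := i)
    (f := fun b : Bool => if b then (1 : ℝ) else 0) Measurable.of_discrete.aestronglyMeasurable,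
    integral_bernoulliMeasure]
  simp

lemma iIndepFun_bernoulliPi :
    iIndepFun (fun i (w : ι → Bool) => (if w i then 1 else 0 : ℝ) - p i) (bernoulliPi p) :=
  iIndepFun_pi (X := fun i (b : Bool) => (if b then 1 else 0 : ℝ) - p i)
    fun _ => Measurable.of_discrete.aemeasurable

lemma hasSubgaussianMGF_bernoulliPi_sum (s : Finset ι) :
    HasSubgaussianMGF (fun w => ∑ i ∈ s, ((if w i then 1 else 0 : ℝ) - p i))
      (s.card / 4) (bernoulliPi p) := by
  have hcoord (i : ι) : HasSubgaussianMGF (fun w => (if w i then 1 else 0 : ℝ) - p i)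
      (1 / 4) (bernoulliPi p) := by
    have := hasSubgaussianMGF_of_mem_Icc (μ := bernoulliPi p)
      (X := fun w => (if w i then 1 else 0 : ℝ)) (a := 0) (b := 1)
      Measurable.of_discrete.aemeasurable (ae_of_all _ fun w => by by_cases w i <;> simp [*])
    rw [integral_bernoulliPi_indicator] at this
    convert this using 1
    norm_num
  convert HasSubgaussianMGF.sum_of_iIndepFun (iIndepFun_bernoulliPi p) (s := s)
    fun i _ => hcoord i using 1
  simp [div_eq_mul_inv]

lemma bernoulliPi_real_sum_sub_sum_ge_le {W P : Finset ι} (hWP : Disjoint W P) {ε : ℝ}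
    (hε : 0 ≤ ε) :
    (bernoulliPi p).real {w | ε ≤ ∑ i ∈ W, ((if w i then 1 else 0 : ℝ) - p i)
        - ∑ i ∈ P, ((if w i then 1 else 0 : ℝ) - p i)}
      ≤ exp (-2 * ε ^ 2 / (W.card + P.card)) := by
  have hindep : IndepFun (fun w => ∑ i ∈ W, ((if w i then 1 else 0 : ℝ) - p i))
      (fun w => ∑ i ∈ P, ((if w i then 1 else 0 : ℝ) - p i)) (bernoulliPi p) := by
    have := ((iIndepFun_bernoulliPi p).indepFun_finset W P hWP
      fun _ => Measurable.of_discrete).comp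
      (φ := fun x : W → ℝ => ∑ i, x i) (ψ := fun x : P → ℝ => ∑ i, x i)
      (by fun_prop) (by fun_prop)
    convert this using 1 <;> funext w <;> exact (Finset.sum_coe_sort _ _).symm
  convert ((hasSubgaussianMGF_bernoulliPi_sum p W).sub_of_indepFun
    (hasSubgaussianMGF_bernoulliPi_sum p P) hindep).measure_ge_le hε using 2
  push_cast
  rw [show 2 * ((W.card : ℝ) / 4 + P.card / 4) = (W.card + P.card) / 2 by ring,
    div_div_eq_mul_div]
  ring

end BernoulliProduct

section LetterProbabilities

variable {c : ℝ} {n k l a : ℕ}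

lemma pr_of_le (h : (k : ℝ) ≤ 16 * c ^ 2 * log n) : pr c n k = 1 := if_pos h

lemma pr_of_lt (h : 16 * c ^ 2 * log n < k) : pr c n k = 1 / 2 + c * √(log n / k) :=
  if_neg h.not_ge

lemma abs_mul_sqrt_log_div_le (h : 16 * c ^ 2 * log n < k) : |c * √(log n / k)| ≤ 1 / 4 := by
  have hk : (0 : ℝ) < k := lt_of_le_of_lt (by positivity [Real.log_natCast_nonneg n]) h
  refine abs_le_of_sq_le_sq ?_ (by norm_num)
  rw [mul_pow, sq_sqrt (div_nonneg (Real.log_natCast_nonneg n) hk.le), ← mul_div_assoc,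
    div_le_iff₀ hk]
  linarith

lemma pr_mem_unitInterval (c : ℝ) (n k : ℕ) : pr c n k ∈ I := by
  unfold pr
  split_ifs with h
  · exact unitInterval.one_mem
  · have := abs_le.mp (abs_mul_sqrt_log_div_le (not_le.mp h))
    constructor <;> linarith

lemma sum_pr_Ico_le (hc : 0 ≤ c) (hl : 16 * c ^ 2 * log n < l) (hla : l ≤ a) :
    ∑ j ∈ Finset.Ico a (a + l), pr c n (j + 1) ≤ l / 2 + c * √(l * log n) := by
  have hL := Real.log_natCast_nonneg n
  have hl0 : (0 : ℝ) < l := lt_of_le_of_lt (by positivity) hl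
  calc ∑ j ∈ Finset.Ico a (a + l), pr c n (j + 1)
      ≤ ∑ j ∈ Finset.Ico a (a + l), (1 / 2 + c * √(log n / l)) := by
        refine Finset.sum_le_sum fun j hj => ?_
        have hlj : (l : ℝ) ≤ (j + 1 : ℕ) := by
          exact_mod_cast (by simp at hj; omega : l ≤ j + 1)
        rw [pr_of_lt (hl.trans_le hlj)]
        gcongr
    _ = l / 2 + c * √(l * log n) := by
        rw [Finset.sum_const, Nat.card_Ico, nsmul_eq_mul, Nat.add_sub_cancel_left,
          sqrt_div' _ hl0.le, sqrt_mul hl0.le]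
        field_simp
        linear_combination (-(2 * c * √(log n))) * mul_self_sqrt hl0.le

lemma two_mul_sqrt_sub_le_sum_inv_sqrt {s t : ℕ} (h : s ≤ t) :
    2 * (√(t + 1) - √(s + 1)) ≤ ∑ j ∈ Finset.Ico s t, 1 / √(j + 1) := by
  induction t, h using Nat.le_induction with
  | base => simp
  | succ t hst ih =>
    have hx : 0 < √((t : ℝ) + 1) := sqrt_pos.mpr (by positivity)
    have hstep : 2 * (√((t : ℝ) + 1 + 1) - √(t + 1)) ≤ 1 / √(t + 1) := by
      rw [le_div_iff₀ hx]
      nlinarith [sq_nonneg (√((t : ℝ) + 1 + 1) - √(t + 1)),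
        sq_sqrt (by positivity : (0 : ℝ) ≤ t + 1),
        sq_sqrt (by positivity : (0 : ℝ) ≤ t + 1 + 1)]
    rw [Finset.sum_Ico_succ_top hst]
    push_cast
    linarith

lemma sum_pr_range_ge (hc : 0 ≤ c) (hl : 16 * c ^ 2 * log n < l) :
    l / 2 + 2 * c * √(l * log n) - 1 / 2 ≤ ∑ j ∈ Finset.range l, pr c n (j + 1) := by
  have hL := Real.log_natCast_nonneg n
  set m := ⌊16 * c ^ 2 * log n⌋₊
  have hm : (m : ℝ) ≤ 16 * c ^ 2 * log n := Nat.floor_le (by positivity)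
  have hm' : 16 * c ^ 2 * log n < m + 1 := Nat.lt_floor_add_one _
  have hml : m ≤ l := ((Nat.floor_lt (by positivity)).mpr hl).le
  have hhead : ∑ j ∈ Finset.range m, pr c n (j + 1) = m := by
    rw [Finset.sum_congr rfl fun j hj => pr_of_le ?_]
    · simp
    · exact le_trans (by exact_mod_cast Finset.mem_range.mp hj) hm
  have htail : ∑ j ∈ Finset.Ico m l, pr c n (j + 1)
      = (l - m) / 2 + c * √(log n) * ∑ j ∈ Finset.Ico m l, 1 / √(j + 1) := by
    rw [Finset.sum_congr rfl fun j hj => pr_of_lt ?_]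
    · rw [Finset.sum_add_distrib, Finset.sum_const, Nat.card_Ico, nsmul_eq_mul, Finset.mul_sum,
        Nat.cast_sub hml]
      congr 1
      · ring
      · refine Finset.sum_congr rfl fun j _ => ?_
        rw [sqrt_div' _ (by positivity)]
        push_cast
        ring
    · exact hm'.trans_le (by exact_mod_cast (by simp at hj; omega : m + 1 ≤ j + 1))
  -- Each of the `m` forced ones exceeds `1/2` by `1/2`; together they cover the loss
  -- `2 c √(log n (m + 1))` from starting the comparison with `∫ 1 / √x` only at `m`.
  have hcorner : 2 * c * √(log n) * √(m + 1) ≤ (m + 1) / 2 := by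
    refine (le_abs_self _).trans (abs_le_of_sq_le_sq ?_ (by positivity))
    rw [mul_pow, mul_pow, mul_pow, sq_sqrt hL, sq_sqrt (by positivity)]
    nlinarith [mul_le_mul_of_nonneg_left hm'.le (by positivity : (0 : ℝ) ≤ m + 1)]
  have hsum := two_mul_sqrt_sub_le_sum_inv_sqrt hml
  have hsqrt : √(l * log n) ≤ √(l + 1) * √(log n) := by
    rw [sqrt_mul (Nat.cast_nonneg l)]
    gcongr
    linarith
  rw [← Finset.sum_range_add_sum_Ico _ hml, hhead, htail]
  nlinarith [mul_le_mul_of_nonneg_left hsum (mul_nonneg hc (sqrt_nonneg (log n)))]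

lemma mul_sqrt_le_one_add_sum_pr_range_sub_sum_pr_Ico (hc : 0 ≤ c)
    (hl : 16 * c ^ 2 * log n < l) (hla : l ≤ a) :
    c * √(l * log n)
      ≤ 1 + ∑ j ∈ Finset.range l, pr c n (j + 1)
          - ∑ j ∈ Finset.Ico a (a + l), pr c n (j + 1) := by
  nlinarith [sum_pr_Ico_le hc hl hla, sum_pr_range_ge hc hl, sqrt_nonneg (l * log n)]

end LetterProbabilities

section RandomWord

variable {c : ℝ} {n l a : ℕ}

noncomputable def letterProb (c : ℝ) (n : ℕ) (i : Fin n) : I :=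
  ⟨pr c n (i + 1), pr_mem_unitInterval c n _⟩

noncomputable abbrev wordMeasure (c : ℝ) (n : ℕ) : Measure (Fin n → Bool) :=
  bernoulliPi (letterProb c n)

lemma wordMeasure_real_finset (s : Finset (Fin n → Bool)) :
    (wordMeasure c n).real s = ∑ w ∈ s, wordProb c n w := by
  rw [← sum_measureReal_singleton]
  exact Finset.sum_congr rfl fun w _ => bernoulliPi_real_singleton _ w

lemma wordMeasure_real_cnt_lt_eq_zero (hl : (l : ℝ) ≤ 16 * c ^ 2 * log n) (han : a + l ≤ n) :
    (wordMeasure c n).real {w | cnt (ext w) 0 l < cnt (ext w) a (a + l)} = 0 := by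
  have hsub : {w : Fin n → Bool | cnt (ext w) 0 l < cnt (ext w) a (a + l)}
      ⊆ ⋃ i ∈ Finset.univ.filter (fun i : Fin n => (i : ℕ) < l), {w | w i = false} := by
    intro w hw
    by_contra hfalse
    simp only [Set.mem_iUnion, Set.mem_ofPred_eq, Finset.mem_filter, Finset.mem_univ, true_and,
      exists_prop, not_exists, not_and, Bool.not_eq_false] at hfalse
    have hprefix : cnt (ext w) 0 l = l := by
      refine (cnt_eq_sub_of_forall fun i hi => ?_).trans (Nat.sub_zero l)
      have hi : i < l := (Finset.mem_Ico.mp hi).2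
      simpa [ext, show i < n by omega] using hfalse ⟨i, by omega⟩ hi
    have := cnt_le_sub (ext w) a (a + l)
    simp only [Set.mem_ofPred_eq] at hw
    omega
  refine le_antisymm ((measureReal_mono hsub (measure_ne_top _ _)).trans
    ((measureReal_biUnion_finset_le _ _).trans ?_)) measureReal_nonneg
  refine (Finset.sum_eq_zero fun i hi => ?_).le
  rw [bernoulliPi_real_eval_false, letterProb, Subtype.coe_mk, pr_of_le, sub_self]
  have hi : (i : ℕ) + 1 ≤ l := (Finset.mem_filter.mp hi).2
  exact le_trans (by exact_mod_cast hi) hl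

lemma wordMeasure_real_cnt_lt_le_of_lt (hc : 0 ≤ c) (hl : 16 * c ^ 2 * log n < l) (hla : l ≤ a)
    (han : a + l ≤ n) :
    (wordMeasure c n).real {w | cnt (ext w) 0 l < cnt (ext w) a (a + l)}
      ≤ exp (-(c ^ 2 * log n)) := by
  set W := Finset.univ.filter (fun i : Fin n => a ≤ (i : ℕ) ∧ (i : ℕ) < a + l)
  set P := Finset.univ.filter (fun i : Fin n => 0 ≤ (i : ℕ) ∧ (i : ℕ) < l)
  set ε := 1 + ∑ j ∈ Finset.Ico 0 l, pr c n (j + 1)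
    - ∑ j ∈ Finset.Ico a (a + l), pr c n (j + 1)
  have hgap : c * √(l * log n) ≤ ε := by
    simpa only [ε, ← Finset.range_eq_Ico] using
      mul_sqrt_le_one_add_sum_pr_range_sub_sum_pr_Ico hc hl hla
  have hW : W.card = l := by simpa using card_filter_fin_eq (a := a) han
  have hP : P.card = l := card_filter_fin_eq (a := 0) (b := l) (by omega)
  have hsub : {w : Fin n → Bool | cnt (ext w) 0 l < cnt (ext w) a (a + l)}
      ⊆ {w | ε ≤ ∑ i ∈ W, ((if w i then 1 else 0 : ℝ) - letterProb c n i)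
          - ∑ i ∈ P, ((if w i then 1 else 0 : ℝ) - letterProb c n i)} := by
    intro w hw
    have hlt : (cnt (ext w) 0 l : ℝ) + 1 ≤ cnt (ext w) a (a + l) := by exact_mod_cast hw
    rw [cnt_ext_eq_sum w han, cnt_ext_eq_sum w (by omega)] at hlt
    simp only [Set.mem_ofPred_eq, Finset.sum_sub_distrib, ε, letterProb]
    rw [sum_filter_fin_eq_sum_Ico (fun j => pr c n (j + 1)) han,
      sum_filter_fin_eq_sum_Ico (fun j => pr c n (j + 1)) (by omega)]
    linarith
  have hdisj : Disjoint W P :=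
    Finset.disjoint_filter.mpr fun i _ hiW hiP => by omega
  have hl0 : (0 : ℝ) < l := lt_of_le_of_lt (by positivity [Real.log_natCast_nonneg n]) hl
  calc _ ≤ _ := measureReal_mono hsub
    _ ≤ exp (-2 * ε ^ 2 / (W.card + P.card)) :=
        bernoulliPi_real_sum_sub_sum_ge_le _ hdisj ((mul_nonneg hc (sqrt_nonneg _)).trans hgap)
    _ ≤ exp (-(c ^ 2 * log n)) := by
        rw [exp_le_exp, hW, hP, div_le_iff₀ (by positivity)]
        have := pow_le_pow_left₀ (by positivity) hgap 2
        rw [mul_pow, sq_sqrt (by positivity [Real.log_natCast_nonneg n])] at this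
        nlinarith

lemma wordMeasure_real_cnt_lt_le (hc : 0 ≤ c) (hla : l ≤ a) (han : a + l ≤ n) :
    (wordMeasure c n).real {w | cnt (ext w) 0 l < cnt (ext w) a (a + l)}
      ≤ exp (-(c ^ 2 * log n)) := by
  rcases le_or_gt (l : ℝ) (16 * c ^ 2 * log n) with hl | hl
  · rw [wordMeasure_real_cnt_lt_eq_zero hl han]
    positivity
  · exact wordMeasure_real_cnt_lt_le_of_lt hc hl hla han

lemma wordMeasure_real_not_isPrefixNormal_le (hc : 0 ≤ c) (n : ℕ) :
    (wordMeasure c n).real {w | ¬IsPrefixNormal n (ext w)}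
      ≤ (n + 1) ^ 2 * exp (-(c ^ 2 * log n)) := by
  set s := (Finset.range (n + 1) ×ˢ Finset.range (n + 1)).filter
    (fun q : ℕ × ℕ => q.2 ≤ q.1 ∧ q.1 + q.2 ≤ n)
  have hsub : {w : Fin n → Bool | ¬IsPrefixNormal n (ext w)}
      ⊆ ⋃ q ∈ s, {w | cnt (ext w) 0 q.2 < cnt (ext w) q.1 (q.1 + q.2)} := by
    intro w hw
    obtain ⟨a, l, hla, han, hlt⟩ : ∃ a l, l ≤ a ∧ a + l ≤ n ∧
        cnt (ext w) 0 l < cnt (ext w) a (a + l) := by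
      by_contra! h
      exact hw (isPrefixNormal_of_disjoint_windows h)
    simp only [Set.mem_iUnion, Set.mem_ofPred_eq, exists_prop]
    exact ⟨(a, l), by simp [s]; omega, hlt⟩
  have hcard : (s.card : ℝ) ≤ (n + 1) ^ 2 := by
    have := Finset.card_filter_le (Finset.range (n + 1) ×ˢ Finset.range (n + 1))
      (fun q : ℕ × ℕ => q.2 ≤ q.1 ∧ q.1 + q.2 ≤ n)
    rw [Finset.card_product, Finset.card_range] at this
    exact_mod_cast (sq (n + 1)).symm ▸ this
  calc _ ≤ ∑ q ∈ s, (wordMeasure c n).real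
          {w | cnt (ext w) 0 q.2 < cnt (ext w) q.1 (q.1 + q.2)} :=
        (measureReal_mono hsub (measure_ne_top _ _)).trans (measureReal_biUnion_finset_le _ _)
    _ ≤ ∑ _q ∈ s, exp (-(c ^ 2 * log n)) := Finset.sum_le_sum fun q hq => by
        have hq := (Finset.mem_filter.mp hq).2
        exact wordMeasure_real_cnt_lt_le hc hq.1 hq.2
    _ ≤ (n + 1) ^ 2 * exp (-(c ^ 2 * log n)) := by
        rw [Finset.sum_const, nsmul_eq_mul]
        gcongr

end RandomWord

lemma tendsto_succ_sq_mul_exp_neg_mul_log {s : ℝ} (hs : 2 < s) :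
    Tendsto (fun n : ℕ => ((n : ℝ) + 1) ^ 2 * exp (-(s * log n))) atTop (𝓝 0) := by
  have hpow : Tendsto (fun n : ℕ => 4 * (n : ℝ) ^ (2 - s)) atTop (𝓝 0) := by
    simpa [neg_sub] using ((tendsto_rpow_neg_atTop (by linarith : 0 < s - 2)).comp
      tendsto_natCast_atTop_atTop).const_mul 4
  refine squeeze_zero' (Eventually.of_forall fun n => by positivity) ?_ hpow
  filter_upwards [eventually_ge_atTop 1] with n hn
  have hn0 : (0 : ℝ) < n := by exact_mod_cast hn
  have hn1 : (1 : ℝ) ≤ n := by exact_mod_cast hn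
  have hexp : exp (-(s * log n)) = (n : ℝ) ^ (-s) := by
    rw [rpow_def_of_pos hn0]
    ring_nf
  calc ((n : ℝ) + 1) ^ 2 * exp (-(s * log n))
      ≤ (4 * (n : ℝ) ^ (2 : ℝ)) * (n : ℝ) ^ (-s) := by
        rw [hexp, rpow_two]
        gcongr
        nlinarith
    _ = 4 * (n : ℝ) ^ (2 - s) := by
        rw [mul_assoc, ← rpow_add hn0, ← sub_eq_add_neg]

open scoped Classical in
/-- Fix `c > √2`. For the random word of length `n` with independent letters,
where `w_k = 1` with probability `p_k`, the probability that `w` is prefix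
normal tends to `1` as `n → ∞`. -/
theorem random_word_prefix_normal_whp (c : ℝ) (hc : Real.sqrt 2 < c) :
    Filter.Tendsto
      (fun n : ℕ =>
        ∑ w ∈ Finset.univ.filter (fun w : Fin n → Bool =>
            IsPrefixNormal n (ext w)),
          wordProb c n w)
      Filter.atTop (nhds 1) := by
  have hc0 : 0 ≤ c := (sqrt_nonneg 2).trans hc.le
  have hgood (n : ℕ) :
      ∑ w ∈ Finset.univ.filter (fun w : Fin n → Bool => IsPrefixNormal n (ext w)),
        wordProb c n w = (wordMeasure c n).real {w | IsPrefixNormal n (ext w)} := by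
    rw [← wordMeasure_real_finset]
    simp
  have hbad (n : ℕ) : 1 - (n + 1) ^ 2 * exp (-(c ^ 2 * log n))
      ≤ (wordMeasure c n).real {w | IsPrefixNormal n (ext w)} := by
    have := wordMeasure_real_not_isPrefixNormal_le hc0 n
    rw [← Set.compl_ofPred, measureReal_compl MeasurableSet.of_discrete, probReal_univ] at this
    linarith
  have hlim := (tendsto_succ_sq_mul_exp_neg_mul_log (lt_sq_of_sqrt_lt hc)).const_sub 1
  rw [sub_zero] at hlim
  simp_rw [hgood]
  exact tendsto_of_tendsto_of_tendsto_of_le_of_le hlim tendsto_const_nhds hbad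
    fun n => measureReal_le_one
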